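/- Let G and H be finite simple graphs on disjoint vertex sets, each having at least one edge, and suppose G has no maximal independent set of cardinality 1. Then the join G ∨ H is well-f-covered if and only if all of the following hold: (1) G and H are well-f-covered; (2) G is well-covered and any two maximal independent sets of H of cardinality at least 2 have the same cardinality; (3) f(G) = f(H) = α(G) + 1 = α(H) + 1. In that case f(G ∨ H) = f(G) = f(H). -/

import Mathlib

/-!
In `G ∨ H` every vertex of `G` is adjacent to every vertex of `H`. Hence an induced forest of
the join that meets both sides in at least two vertices contains a 4-cycle, and one that meets
`H` and contains an edge of `G` contains a triangle (and symmetrically). So the maximal induced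
forests of `G ∨ H` are the maximal induced forests of `G` and of `H`, the sets `A ∪ {w}`
with `w ∈ H` and `A` maximal independent in `G` (so `|A| ≥ 2`), and the sets `{v} ∪ B` with
`v ∈ G` and `B` maximal independent in `H`, `|B| ≥ 2`. The join is well-f-covered exactly when
all these sets have the same size, and comparing the sizes `f(G)`, `f(H)`, `|A| + 1`,
`|B| + 1` gives (1)–(3).
-/

/-- `X` induces a forest in `G`: the subgraph induced by `X` is acyclic. -/
def IsInducedForest {V : Type*} (G : SimpleGraph V) (X : Finset V) : Prop :=
  (G.induce (X : Set V)).IsAcyclic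

/-- `X` is a maximal induced forest of `G`. -/
def IsMaximalInducedForest {V : Type*} (G : SimpleGraph V) (X : Finset V) : Prop :=
  IsInducedForest G X ∧ ∀ Y : Finset V, X ⊂ Y → ¬ IsInducedForest G Y

/-- The forest number of `G`: maximum cardinality of an induced forest. -/
noncomputable def forestNum {V : Type*} (G : SimpleGraph V) : ℕ :=
  sSup {n | ∃ X : Finset V, IsInducedForest G X ∧ X.card = n}

/-- `G` is well-f-covered: all maximal induced forests have the same cardinality. -/
def WellFCovered {V : Type*} (G : SimpleGraph V) : Prop :=
  ∀ X Y : Finset V, IsMaximalInducedForest G X → IsMaximalInducedForest G Y →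
    X.card = Y.card

def IsIndepFinset {V : Type*} (G : SimpleGraph V) (X : Finset V) : Prop :=
  ∀ ⦃u⦄, u ∈ X → ∀ ⦃v⦄, v ∈ X → ¬ G.Adj u v

def IsMaximalIndepSet {V : Type*} (G : SimpleGraph V) (X : Finset V) : Prop :=
  IsIndepFinset G X ∧ ∀ Y : Finset V, X ⊂ Y → ¬ IsIndepFinset G Y

noncomputable def indepNum {V : Type*} (G : SimpleGraph V) : ℕ :=
  sSup {n | ∃ X : Finset V, IsIndepFinset G X ∧ X.card = n}

def WellCovered {V : Type*} (G : SimpleGraph V) : Prop :=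
  ∀ X Y : Finset V, IsMaximalIndepSet G X → IsMaximalIndepSet G Y → X.card = Y.card

/-- The join of two graphs on disjoint vertex sets. -/
def joinGraph {V W : Type*} (G : SimpleGraph V) (H : SimpleGraph W) :
    SimpleGraph (V ⊕ W) where
  Adj a b :=
    match a, b with
    | Sum.inl u, Sum.inl v => G.Adj u v
    | Sum.inr u, Sum.inr v => H.Adj u v
    | Sum.inl _, Sum.inr _ => True
    | Sum.inr _, Sum.inl _ => True
  symm := ⟨by rintro (u|u) (v|v) h <;> first | exact h.symm | trivial⟩
  loopless := ⟨by rintro (u|u) h <;> exact SimpleGraph.irrefl _ h⟩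

open Finset

namespace SimpleGraph.IsAcyclic

variable {α : Type*} {Γ : SimpleGraph α} {a b c d : α}

theorem not_adj_of_adj_of_adj (h : Γ.IsAcyclic) (hab : Γ.Adj a b) (hac : Γ.Adj a c) :
    ¬ Γ.Adj b c := by
  classical
  exact fun hbc => h.cliqueFree le_rfl {a, b, c} (is3Clique_triple_iff.2 ⟨hab, hac, hbc⟩)

theorem eq_of_adj_of_adj (h : Γ.IsAcyclic) (hab : a ≠ b) (hac : Γ.Adj a c) (hcb : Γ.Adj c b)
    (had : Γ.Adj a d) (hdb : Γ.Adj d b) : c = d := by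
  by_contra hcd
  have hp : (Walk.cons hac (Walk.cons hcb .nil)).IsPath := by
    simp [hab, hac.ne, hcb.ne]
  have hq : (Walk.cons had .nil).IsPath := by simp [had.ne]
  have hd := h.mem_support_of_ne_mem_support_of_adj_of_isPath hp hq hdb.symm
    (by simp [hab.symm, hdb.ne.symm])
  simp only [Walk.support_cons, Walk.support_nil, List.mem_cons, List.not_mem_nil,
    or_false] at hd
  rcases hd with rfl | rfl | rfl
  exacts [had.ne rfl, hcd rfl, hdb.ne rfl]

end SimpleGraph.IsAcyclic

section InducedForest

variable {α : Type*} {Γ : SimpleGraph α} {X Y : Finset α}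

theorem isInducedForest_empty : IsInducedForest Γ ∅ :=
  fun v => absurd v.2 (notMem_empty _)

theorem IsInducedForest.anti (hY : IsInducedForest Γ Y) (hXY : X ⊆ Y) :
    IsInducedForest Γ X :=
  hY.embedding (SimpleGraph.induceHomOfLE Γ (coe_subset.2 hXY))

theorem IsInducedForest.not_adj_of_adj_of_adj (hX : IsInducedForest Γ X) {a b c : α}
    (ha : a ∈ X) (hb : b ∈ X) (hc : c ∈ X) (hab : Γ.Adj a b) (hac : Γ.Adj a c) :
    ¬ Γ.Adj b c :=
  SimpleGraph.IsAcyclic.not_adj_of_adj_of_adj (a := (⟨a, ha⟩ : (X : Set α))) (b := ⟨b, hb⟩)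
    (c := ⟨c, hc⟩) hX hab hac

theorem IsInducedForest.eq_of_adj_of_adj (hX : IsInducedForest Γ X) {a b c d : α}
    (ha : a ∈ X) (hb : b ∈ X) (hc : c ∈ X) (hd : d ∈ X) (hab : a ≠ b) (hac : Γ.Adj a c)
    (hcb : Γ.Adj c b) (had : Γ.Adj a d) (hdb : Γ.Adj d b) : c = d :=
  congrArg Subtype.val <| SimpleGraph.IsAcyclic.eq_of_adj_of_adj (a := (⟨a, ha⟩ : (X : Set α)))
    (b := ⟨b, hb⟩) (c := ⟨c, hc⟩) (d := ⟨d, hd⟩) hX (by simpa using hab) hac hcb had hdb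

theorem IsIndepFinset.anti (hY : IsIndepFinset Γ Y) (hXY : X ⊆ Y) : IsIndepFinset Γ X :=
  fun _ hu _ hv => hY (hXY hu) (hXY hv)

theorem isInducedForest_map_iff {β : Type*} {Δ : SimpleGraph β} (f : Γ ↪g Δ) :
    IsInducedForest Δ (X.map f.toEmbedding) ↔ IsInducedForest Γ X := by
  let e : Γ.induce X ≃g Δ.induce (f '' X) :=
    ⟨Equiv.Set.image f X f.injective, f.map_adj_iff⟩
  rw [IsInducedForest, IsInducedForest, coe_map]
  exact e.isAcyclic_iff.symm

theorem isMaximalInducedForest_iff_maximal :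
    IsMaximalInducedForest Γ X ↔ Maximal (IsInducedForest Γ) X :=
  maximal_iff_forall_gt.symm

theorem isMaximalIndepSet_iff_maximal : IsMaximalIndepSet Γ X ↔ Maximal (IsIndepFinset Γ) X :=
  maximal_iff_forall_gt.symm

variable [DecidableEq α]

theorem isIndepFinset_pair {a b : α} (h : ¬ Γ.Adj a b) : IsIndepFinset Γ {a, b} := by
  simp only [IsIndepFinset, mem_insert, mem_singleton]
  rintro u (rfl | rfl) v (rfl | rfl)
  exacts [Γ.irrefl, h, fun h' => h h'.symm, Γ.irrefl]

theorem IsIndepFinset.isInducedForest_insert (hX : IsIndepFinset Γ X) (v : α) :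
    IsInducedForest Γ (insert v X) := by
  let center : ((insert v X : Finset α) : Set α) := ⟨v, mem_insert_self v X⟩
  refine (SimpleGraph.isAcyclic_starGraph center).anti
    fun ⟨x, hx⟩ ⟨y, hy⟩ hxy => SimpleGraph.starGraph_adj.2 ⟨hxy.ne, ?_⟩
  simp only [center, Subtype.mk.injEq]
  rcases mem_insert.1 hx with rfl | hx
  · exact .inl rfl
  rcases mem_insert.1 hy with rfl | hy
  · exact .inr rfl
  exact absurd hxy (hX hx hy)

theorem isMaximalInducedForest_iff_forall_insert :
    IsMaximalInducedForest Γ X ↔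
      IsInducedForest Γ X ∧ ∀ v ∉ X, ¬ IsInducedForest Γ (insert v X) := by
  rw [isMaximalInducedForest_iff_maximal]
  exact maximal_iff_forall_insert fun _ _ hY hXY => hY.anti hXY

theorem isMaximalIndepSet_iff_forall_insert :
    IsMaximalIndepSet Γ X ↔
      IsIndepFinset Γ X ∧ ∀ v ∉ X, ¬ IsIndepFinset Γ (insert v X) := by
  rw [isMaximalIndepSet_iff_maximal]
  exact maximal_iff_forall_insert fun _ _ hY hXY => hY.anti hXY

end InducedForest

section Numbers

variable {α : Type*} [Fintype α] {Γ : SimpleGraph α} {X : Finset α}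

theorem bddAbove_card_setOf (P : Finset α → Prop) : BddAbove {n | ∃ Y, P Y ∧ #Y = n} :=
  ⟨Fintype.card α, by rintro _ ⟨Y, -, rfl⟩; exact card_le_univ Y⟩

theorem exists_maximal_card_eq_sSup {P : Finset α → Prop} (h0 : P ∅) :
    ∃ X, Maximal P X ∧ #X = sSup {n | ∃ Y, P Y ∧ #Y = n} := by
  obtain ⟨Y, hY, hYc⟩ :=
    Nat.sSup_mem (s := {n | ∃ Y, P Y ∧ #Y = n}) ⟨0, ∅, h0, rfl⟩ (bddAbove_card_setOf P)
  obtain ⟨Z, hYZ, hZ⟩ := Finite.exists_le_maximal hY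
  exact ⟨Z, hZ, le_antisymm (le_csSup (bddAbove_card_setOf P) ⟨Z, hZ.prop, rfl⟩)
    (hYc ▸ card_le_card hYZ)⟩

theorem exists_isMaximalInducedForest_card_eq_forestNum (Γ : SimpleGraph α) :
    ∃ X, IsMaximalInducedForest Γ X ∧ #X = forestNum Γ := by
  simpa only [isMaximalInducedForest_iff_maximal, forestNum] using
    exists_maximal_card_eq_sSup (isInducedForest_empty (Γ := Γ))

theorem exists_isMaximalIndepSet_card_eq_indepNum (Γ : SimpleGraph α) :
    ∃ X, IsMaximalIndepSet Γ X ∧ #X = indepNum Γ := by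
  simpa only [isMaximalIndepSet_iff_maximal, indepNum] using
    exists_maximal_card_eq_sSup (P := IsIndepFinset Γ) fun _ h => absurd h (notMem_empty _)

theorem WellFCovered.forestNum_eq_card (hΓ : WellFCovered Γ)
    (hX : IsMaximalInducedForest Γ X) : forestNum Γ = #X := by
  obtain ⟨Y, hY, hYc⟩ := exists_isMaximalInducedForest_card_eq_forestNum Γ
  exact hYc ▸ hΓ Y X hY hX

theorem WellCovered.indepNum_eq_card (hΓ : WellCovered Γ) (hX : IsMaximalIndepSet Γ X) :
    indepNum Γ = #X := by
  obtain ⟨Y, hY, hYc⟩ := exists_isMaximalIndepSet_card_eq_indepNum Γ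
  exact hYc ▸ hΓ Y X hY hX

theorem IsIndepFinset.card_le_indepNum (hX : IsIndepFinset Γ X) : #X ≤ indepNum Γ :=
  le_csSup (bddAbove_card_setOf _) ⟨X, hX, rfl⟩

theorem IsInducedForest.two_le_indepNum [DecidableEq α] (hX : IsInducedForest Γ X)
    (h3 : 2 < #X) : 2 ≤ indepNum Γ := by
  obtain ⟨a, ha, b, hb, c, hc, hab, hac, hbc⟩ := two_lt_card.1 h3
  have hnonadj : ¬ Γ.Adj a b ∨ ¬ Γ.Adj a c ∨ ¬ Γ.Adj b c := by
    by_contra! h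
    exact hX.not_adj_of_adj_of_adj ha hb hc h.1 h.2.1 h.2.2
  rcases hnonadj with h | h | h
  · exact card_pair hab ▸ (isIndepFinset_pair h).card_le_indepNum
  · exact card_pair hac ▸ (isIndepFinset_pair h).card_le_indepNum
  · exact card_pair hbc ▸ (isIndepFinset_pair h).card_le_indepNum

end Numbers

section Maximal

variable {α : Type*} {Γ : SimpleGraph α} {X : Finset α}

theorem IsMaximalIndepSet.nonempty [Nonempty α] (hX : IsMaximalIndepSet Γ X) : X.Nonempty := by
  rw [nonempty_iff_ne_empty]
  rintro rfl
  obtain ⟨v⟩ := ‹Nonempty α›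
  refine hX.2 {v} (singleton_nonempty v).empty_ssubset fun x hx y hy => ?_
  rw [mem_singleton] at hx hy
  subst hx hy
  exact Γ.irrefl

theorem IsMaximalInducedForest.not_isIndepFinset [DecidableEq α] {u v : α} (huv : Γ.Adj u v)
    (hX : IsMaximalInducedForest Γ X) : ¬ IsIndepFinset Γ X := by
  intro hind
  obtain ⟨w, hw⟩ : ∃ w, w ∉ X := by
    by_contra! h
    exact hind (h u) (h v) huv
  exact (isMaximalInducedForest_iff_forall_insert.1 hX).2 w hw (hind.isInducedForest_insert w)

end Maximal

namespace Finset

variable {α β : Type*} (s : Finset α) (t : Finset β)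

theorem map_sumComm_disjSum :
    (s.disjSum t).map (Equiv.sumComm α β).toEmbedding = t.disjSum s := by
  ext (x | x) <;> simp

variable [DecidableEq α] [DecidableEq β]

theorem insert_inl_disjSum (a : α) :
    insert (Sum.inl a) (s.disjSum t) = (insert a s).disjSum t := by
  ext (x | x) <;> simp

theorem insert_inr_disjSum (b : β) :
    insert (Sum.inr b) (s.disjSum t) = s.disjSum (insert b t) := by
  ext (x | x) <;> simp

end Finset

section Join

open Sum

variable {V W : Type*} {G : SimpleGraph V} {H : SimpleGraph W} {A F : Finset V} {B : Finset W}

theorem isInducedForest_join_disjSum_empty :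
    IsInducedForest (joinGraph G H) (A.disjSum ∅) ↔ IsInducedForest G A := by
  rw [disjSum_empty]
  exact isInducedForest_map_iff (⟨.inl, Iff.rfl⟩ : G ↪g joinGraph G H)

theorem isInducedForest_join_comm :
    IsInducedForest (joinGraph H G) (B.disjSum A) ↔
      IsInducedForest (joinGraph G H) (A.disjSum B) := by
  let swap : joinGraph G H ↪g joinGraph H G :=
    ⟨(Equiv.sumComm V W).toEmbedding, by rintro (u | u) (v | v) <;> rfl⟩
  rw [← map_sumComm_disjSum]
  exact isInducedForest_map_iff swap

theorem IsInducedForest.isIndepFinset_of_join {w : W}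
    (hX : IsInducedForest (joinGraph G H) (A.disjSum B)) (hw : w ∈ B) : IsIndepFinset G A :=
  fun u hu v hv => hX.not_adj_of_adj_of_adj (a := inr w) (b := inl u) (c := inl v) (by simpa)
    (by simpa) (by simpa) trivial trivial

theorem IsInducedForest.card_le_one_or_card_le_one_of_join
    (hX : IsInducedForest (joinGraph G H) (A.disjSum B)) : #A ≤ 1 ∨ #B ≤ 1 := by
  by_contra! h
  obtain ⟨u, hu, v, hv, huv⟩ := one_lt_card.1 h.1
  obtain ⟨w, hw, x, hx, hwx⟩ := one_lt_card.1 h.2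
  exact hwx <| inr_injective <| hX.eq_of_adj_of_adj (a := inl u) (b := inl v) (by simpa)
    (by simpa) (by simpa) (by simpa) (by simpa) trivial trivial trivial trivial

variable [DecidableEq V] [DecidableEq W]

theorem IsIndepFinset.isInducedForest_join_disjSum_singleton (hA : IsIndepFinset G A) (w : W) :
    IsInducedForest (joinGraph G H) (A.disjSum {w}) := by
  have hind : IsIndepFinset (joinGraph G H) (A.disjSum ∅) := by
    rintro (u | u) hu (v | v) hv <;> simp only [inl_mem_disjSum, inr_mem_disjSum] at hu hv
    · exact hA hu hv
    all_goals exact absurd ‹_ ∈ (∅ : Finset W)› (notMem_empty _)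
  rw [← insert_empty, ← insert_inr_disjSum]
  exact hind.isInducedForest_insert (inr w)

theorem isMaximalInducedForest_join_disjSum_iff :
    IsMaximalInducedForest (joinGraph G H) (A.disjSum B) ↔
      IsInducedForest (joinGraph G H) (A.disjSum B) ∧
      (∀ v ∉ A, ¬ IsInducedForest (joinGraph G H) ((insert v A).disjSum B)) ∧
      ∀ w ∉ B, ¬ IsInducedForest (joinGraph G H) (A.disjSum (insert w B)) := by
  simp only [isMaximalInducedForest_iff_forall_insert, Sum.forall, inl_mem_disjSum,
    inr_mem_disjSum, insert_inl_disjSum, insert_inr_disjSum]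

theorem isMaximalInducedForest_join_comm :
    IsMaximalInducedForest (joinGraph H G) (B.disjSum A) ↔
      IsMaximalInducedForest (joinGraph G H) (A.disjSum B) := by
  simp only [isMaximalInducedForest_join_disjSum_iff,
    isInducedForest_join_comm (G := G) (H := H)]
  tauto

theorem IsMaximalInducedForest.join_disjSum_empty {u v : V} (huv : G.Adj u v)
    (hF : IsMaximalInducedForest G F) :
    IsMaximalInducedForest (joinGraph G H) (F.disjSum ∅) := by
  have hF' := isMaximalInducedForest_iff_forall_insert.1 hF
  refine isMaximalInducedForest_join_disjSum_iff.2 ⟨isInducedForest_join_disjSum_empty.2 hF'.1,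
    fun x hx h => hF'.2 x hx (isInducedForest_join_disjSum_empty.1 h), fun w _ h => ?_⟩
  exact hF.not_isIndepFinset huv (h.isIndepFinset_of_join (mem_insert_self w ∅))

theorem IsMaximalInducedForest.join_empty_disjSum {u v : W} (huv : H.Adj u v)
    {F : Finset W} (hF : IsMaximalInducedForest H F) :
    IsMaximalInducedForest (joinGraph G H) ((∅ : Finset V).disjSum F) :=
  isMaximalInducedForest_join_comm.1 (hF.join_disjSum_empty huv)

theorem IsMaximalIndepSet.join_disjSum_singleton (hA : IsMaximalIndepSet G A) (h2 : 2 ≤ #A)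
    (w : W) : IsMaximalInducedForest (joinGraph G H) (A.disjSum {w}) := by
  refine isMaximalInducedForest_join_disjSum_iff.2 ⟨hA.1.isInducedForest_join_disjSum_singleton w,
    fun v hv h => (isMaximalIndepSet_iff_forall_insert.1 hA).2 v hv
      (h.isIndepFinset_of_join (mem_singleton_self w)), fun x hx h => ?_⟩
  have := h.card_le_one_or_card_le_one_of_join
  rw [card_insert_of_notMem hx, card_singleton] at this
  omega

theorem IsMaximalIndepSet.join_singleton_disjSum {B : Finset W} (hB : IsMaximalIndepSet H B)
    (h2 : 2 ≤ #B) (v : V) : IsMaximalInducedForest (joinGraph G H) (({v} : Finset V).disjSum B) :=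
  isMaximalInducedForest_join_comm.1 (hB.join_disjSum_singleton h2 v)

theorem IsMaximalInducedForest.join_cases_of_card_le_one
    (hX : IsMaximalInducedForest (joinGraph G H) (A.disjSum B)) (hB : #B ≤ 1) :
    (B = ∅ ∧ IsMaximalInducedForest G A) ∨ (#B = 1 ∧ IsMaximalIndepSet G A) := by
  obtain ⟨hX, hins, -⟩ := isMaximalInducedForest_join_disjSum_iff.1 hX
  rcases Nat.le_one_iff_eq_zero_or_eq_one.1 hB with hB | hB
  · obtain rfl := card_eq_zero.1 hB
    exact .inl ⟨rfl, isMaximalInducedForest_iff_forall_insert.2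
      ⟨isInducedForest_join_disjSum_empty.1 hX,
        fun v hv h => hins v hv (isInducedForest_join_disjSum_empty.2 h)⟩⟩
  · obtain ⟨w, rfl⟩ := card_eq_one.1 hB
    exact .inr ⟨hB, isMaximalIndepSet_iff_forall_insert.2
      ⟨hX.isIndepFinset_of_join (mem_singleton_self w),
        fun v hv h => hins v hv (h.isInducedForest_join_disjSum_singleton w)⟩⟩

theorem IsMaximalInducedForest.join_cases
    (hX : IsMaximalInducedForest (joinGraph G H) (A.disjSum B)) :
    (B = ∅ ∧ IsMaximalInducedForest G A) ∨ (A = ∅ ∧ IsMaximalInducedForest H B) ∨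
      (#B = 1 ∧ IsMaximalIndepSet G A) ∨ (#A = 1 ∧ 2 ≤ #B ∧ IsMaximalIndepSet H B) := by
  by_cases hB : #B ≤ 1
  · rcases hX.join_cases_of_card_le_one hB with h | h <;> tauto
  · have hA : #A ≤ 1 := hX.1.card_le_one_or_card_le_one_of_join.resolve_right hB
    rcases (isMaximalInducedForest_join_comm.2 hX).join_cases_of_card_le_one hA with h | h
    · exact .inr (.inl h)
    · exact .inr (.inr (.inr ⟨h.1, by omega, h.2⟩))

end Join

section Main

variable {V W : Type*} [Fintype V] [Fintype W] [DecidableEq V] [DecidableEq W]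
  {G : SimpleGraph V} {H : SimpleGraph W}

theorem WellFCovered.of_join (hJ : WellFCovered (joinGraph G H)) {v₀ v₁ : V}
    (hv : G.Adj v₀ v₁) {w₀ w₁ : W} (hw : H.Adj w₀ w₁)
    (hG2 : ∀ A, IsMaximalIndepSet G A → 2 ≤ #A) :
    (WellFCovered G ∧ WellFCovered H) ∧
      (WellCovered G ∧ ∀ X Y : Finset W, IsMaximalIndepSet H X → IsMaximalIndepSet H Y →
        2 ≤ #X → 2 ≤ #Y → #X = #Y) ∧
      (forestNum G = forestNum H ∧ forestNum G = indepNum G + 1 ∧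
        forestNum H = indepNum H + 1) := by
  obtain ⟨A₀, hA₀, hA₀c⟩ := exists_isMaximalIndepSet_card_eq_indepNum G
  have hcard (X) (hX : IsMaximalInducedForest (joinGraph G H) X) : #X = indepNum G + 1 := by
    simpa [hA₀c] using hJ X _ hX (hA₀.join_disjSum_singleton (hG2 A₀ hA₀) w₀)
  have hfG (F) (hF : IsMaximalInducedForest G F) : #F = indepNum G + 1 := by
    simpa using hcard _ (hF.join_disjSum_empty (H := H) hv)
  have hfH (F) (hF : IsMaximalInducedForest H F) : #F = indepNum G + 1 := by
    simpa using hcard _ (hF.join_empty_disjSum (G := G) hw)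
  have hiG (A) (hA : IsMaximalIndepSet G A) : #A = indepNum G := by
    simpa using hcard _ (hA.join_disjSum_singleton (hG2 A hA) w₀)
  have hiH (B) (hB : IsMaximalIndepSet H B) (h2 : 2 ≤ #B) : #B = indepNum G := by
    have := hcard _ (hB.join_singleton_disjSum h2 v₀)
    simp only [card_disjSum, card_singleton] at this
    omega
  obtain ⟨F, hF, hFc⟩ := exists_isMaximalInducedForest_card_eq_forestNum G
  obtain ⟨F', hF', hF'c⟩ := exists_isMaximalInducedForest_card_eq_forestNum H
  obtain ⟨B, hB, hBc⟩ := exists_isMaximalIndepSet_card_eq_indepNum H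
  have hαH : indepNum H = indepNum G := by
    have h3 : 2 < #F' := by have := hG2 A₀ hA₀; have := hfH F' hF'; omega
    rw [← hBc, hiH B hB (hBc ▸ hF'.1.two_le_indepNum h3)]
  refine ⟨⟨fun X Y hX hY => ?_, fun X Y hX hY => ?_⟩,
    ⟨fun X Y hX hY => ?_, fun X Y hX hY h2X h2Y => ?_⟩, ?_, ?_, ?_⟩
  · rw [hfG X hX, hfG Y hY]
  · rw [hfH X hX, hfH Y hY]
  · rw [hiG X hX, hiG Y hY]
  · rw [hiH X hX h2X, hiH Y hY h2Y]
  all_goals have := hfG F hF; have := hfH F' hF'; omega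

theorem WellFCovered.join (hwfG : WellFCovered G) (hwfH : WellFCovered H) (hwcG : WellCovered G)
    (hH2 : ∀ X Y : Finset W, IsMaximalIndepSet H X → IsMaximalIndepSet H Y →
      2 ≤ #X → 2 ≤ #Y → #X = #Y)
    (hGH : forestNum G = forestNum H) (hfG : forestNum G = indepNum G + 1)
    (hfH : forestNum H = indepNum H + 1) (hαG : 2 ≤ indepNum G) :
    WellFCovered (joinGraph G H) := by
  obtain ⟨B₀, hB₀, hB₀c⟩ := exists_isMaximalIndepSet_card_eq_indepNum H
  suffices h : ∀ Z, IsMaximalInducedForest (joinGraph G H) Z → #Z = forestNum G from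
    fun X Y hX hY => (h X hX).trans (h Y hY).symm
  intro Z hZ
  rw [← toLeft_disjSum_toRight (u := Z)] at hZ ⊢
  rw [card_disjSum]
  rcases hZ.join_cases with ⟨hB, hA⟩ | ⟨hA, hB⟩ | ⟨hB, hA⟩ | ⟨hA, h2, hB⟩
  · rw [hwfG.forestNum_eq_card hA, hB, card_empty, add_zero]
  · rw [hGH, hwfH.forestNum_eq_card hB, hA, card_empty, zero_add]
  · rw [hfG, hwcG.indepNum_eq_card hA, hB]
  · have := hH2 _ _ hB hB₀ h2 (by omega)
    omega

theorem WellFCovered.forestNum_join (hJ : WellFCovered (joinGraph G H)) {u v : V}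
    (huv : G.Adj u v) : forestNum (joinGraph G H) = forestNum G := by
  obtain ⟨F, hF, hFc⟩ := exists_isMaximalInducedForest_card_eq_forestNum G
  rw [hJ.forestNum_eq_card (hF.join_disjSum_empty huv), card_disjSum, hFc, card_empty, add_zero]

end Main

/-- Let `G` and `H` each have at least one edge, and suppose `G` has no
maximal independent set of cardinality 1. Then the join `G ∨ H` is well-f-covered iff
(1) `G` and `H` are well-f-covered, (2) `G` is well-covered and any two maximal
independent sets of `H` of cardinality at least 2 have the same cardinality, and
(3) `f(G) = f(H) = α(G) + 1 = α(H) + 1`. In that case `f(G ∨ H) = f(G) = f(H)`. -/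
theorem stmt13 {V W : Type*} [Fintype V] [Fintype W] [DecidableEq V] [DecidableEq W]
    (G : SimpleGraph V) (H : SimpleGraph W)
    (hGe : ∃ u v, G.Adj u v) (hHe : ∃ u v, H.Adj u v)
    (hG1 : ¬ ∃ X : Finset V, IsMaximalIndepSet G X ∧ X.card = 1) :
    (WellFCovered (joinGraph G H) ↔
      (WellFCovered G ∧ WellFCovered H) ∧
      (WellCovered G ∧ ∀ X Y : Finset W, IsMaximalIndepSet H X → IsMaximalIndepSet H Y →
        2 ≤ X.card → 2 ≤ Y.card → X.card = Y.card) ∧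
      (forestNum G = forestNum H ∧ forestNum G = indepNum G + 1 ∧
        forestNum H = indepNum H + 1)) ∧
    (WellFCovered (joinGraph G H) →
      forestNum (joinGraph G H) = forestNum G ∧
        forestNum (joinGraph G H) = forestNum H) := by
  obtain ⟨v₀, v₁, hv⟩ := hGe
  obtain ⟨w₀, w₁, hw⟩ := hHe
  have : Nonempty V := ⟨v₀⟩
  have hG2 (A) (hA : IsMaximalIndepSet G A) : 2 ≤ #A := by
    have := hA.nonempty.card_pos
    have : #A ≠ 1 := fun h => hG1 ⟨A, hA, h⟩
    omega
  refine ⟨⟨fun hJ => hJ.of_join hv hw hG2, ?_⟩, fun hJ => ?_⟩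
  · rintro ⟨⟨hwfG, hwfH⟩, ⟨hwcG, hH2⟩, hGH, hfG, hfH⟩
    obtain ⟨A, hA, hAc⟩ := exists_isMaximalIndepSet_card_eq_indepNum G
    exact hwfG.join hwfH hwcG hH2 hGH hfG hfH (hAc ▸ hG2 A hA)
  · have hGH := (hJ.of_join hv hw hG2).2.2.1
    exact ⟨hJ.forestNum_join hv, (hJ.forestNum_join hv).trans hGH⟩
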